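/- Combining the two previous estimates: for a partition $0 = t_0 < \cdots < t_N$ with $k_n = t_n - t_{n-1}$ and nonnegative reals $a_n$, one has $\sum_{n=1}^N a_n \le (1 + \log(t_N/k_1))^{1/2} \left(\sum_{n=1}^N \frac{t_n}{k_n} a_n^2\right)^{1/2}$. -/

import Mathlib

/-!
Write `kₙ = tₙ - tₙ₋₁`. Cauchy–Schwarz with the weights `kₙ / tₙ` gives
`(∑ aₙ)² ≤ (∑ kₙ / tₙ) (∑ (tₙ / kₙ) aₙ²)`. The first weight is `k₁ / t₁ = 1`, and for `n ≥ 2`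
the elementary bound `1 - 1/x ≤ log x` at `x = tₙ / tₙ₋₁` gives `kₙ / tₙ ≤ log tₙ - log tₙ₋₁`,
so the weights telescope to at most `1 + log (t_N / t₁)`.
-/

open Finset Real

lemma sq_sum_le_sum_div_mul_sum_div_mul_sq {ι : Type*} (s : Finset ι) {p q : ι → ℝ}
    (hp : ∀ i ∈ s, 0 < p i) (hq : ∀ i ∈ s, 0 < q i) (a : ι → ℝ) :
    (∑ i ∈ s, a i) ^ 2 ≤ (∑ i ∈ s, q i / p i) * ∑ i ∈ s, p i / q i * a i ^ 2 := by
  refine sum_sq_le_sum_mul_sum_of_sq_le_mul s (fun i hi => (div_pos (hq i hi) (hp i hi)).le)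
    (fun i hi => by have := hp i hi; have := hq i hi; positivity) fun i hi => le_of_eq ?_
  have := (hp i hi).ne'
  have := (hq i hi).ne'
  field_simp

lemma sub_div_le_log_div {x y : ℝ} (hx : 0 < x) (hy : 0 < y) : (y - x) / y ≤ log (y / x) := by
  have := one_sub_inv_le_log_of_pos (div_pos hy hx)
  rwa [inv_div, one_sub_div hy.ne'] at this

lemma sum_Icc_sub_div_le_one_add_log {t : ℕ → ℝ} (ht0 : t 0 = 0) {N : ℕ} (hN : 1 ≤ N)
    (hpos : ∀ n ∈ Icc 1 N, 0 < t n) :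
    ∑ n ∈ Icc 1 N, (t n - t (n - 1)) / t n ≤ 1 + log (t N / t 1) := by
  induction N, hN using Nat.le_induction with
  | base => simp [ht0, (hpos 1 (by simp)).ne']
  | succ N hN ih =>
    have htN : 0 < t N := hpos N (by simp; omega)
    have htN1 : 0 < t (N + 1) := hpos (N + 1) (by simp)
    have ht1 : 0 < t 1 := hpos 1 (by simp)
    rw [sum_Icc_succ_top (by omega)]
    calc ∑ n ∈ Icc 1 N, (t n - t (n - 1)) / t n + (t (N + 1) - t N) / t (N + 1)
        ≤ 1 + log (t N / t 1) + log (t (N + 1) / t N) :=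
          add_le_add (ih fun n hn => hpos n (by simp at hn ⊢; omega)) (sub_div_le_log_div htN htN1)
      _ = 1 + log (t (N + 1) / t 1) := by
          rw [add_assoc, ← log_mul (by positivity) (by positivity)]
          field_simp

lemma le_rpow_half_mul_rpow_half_of_sq_le {x c b : ℝ} (hc : 0 ≤ c) (h : x ^ 2 ≤ c * b) :
    x ≤ c ^ ((1 : ℝ) / 2) * b ^ ((1 : ℝ) / 2) := by
  rw [← sqrt_eq_rpow, ← sqrt_eq_rpow, ← sqrt_mul hc]
  exact (le_abs_self x).trans (abs_le_sqrt h)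

theorem sum_le_log_weighted_general (N : ℕ) (hN : 1 ≤ N) (t : ℕ → ℝ) (ht0 : t 0 = 0)
    (hmono : ∀ n, n < N → t n < t (n + 1)) (a : ℕ → ℝ) :
    ∑ n ∈ Finset.Icc 1 N, a n ≤
      (1 + Real.log (t N / (t 1 - t 0))) ^ ((1 : ℝ) / 2) *
        (∑ n ∈ Finset.Icc 1 N, t n / (t n - t (n - 1)) * a n ^ 2) ^ ((1 : ℝ) / 2) := by
  have hstrict : StrictMonoOn t (Set.Iic N) := strictMonoOn_Iic_of_lt_succ hmono
  have hstep : ∀ n ∈ Icc 1 N, 0 < t n - t (n - 1) := fun n hn => by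
    simp only [mem_Icc] at hn
    exact sub_pos.2 (hstrict (by simp; omega) (by simpa using hn.2) (by omega))
  have hpos : ∀ n ∈ Icc 1 N, 0 < t n := fun n hn => by
    simpa [ht0] using hstrict (by simp) (by simpa using (mem_Icc.1 hn).2) (mem_Icc.1 hn).1
  have hweights := sum_Icc_sub_div_le_one_add_log ht0 hN hpos
  have hweights_nonneg : 0 ≤ ∑ n ∈ Icc 1 N, (t n - t (n - 1)) / t n :=
    sum_nonneg fun n hn => (div_pos (hstep n hn) (hpos n hn)).le
  rw [ht0, sub_zero]
  refine le_rpow_half_mul_rpow_half_of_sq_le (hweights_nonneg.trans hweights) ?_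
  calc (∑ n ∈ Icc 1 N, a n) ^ 2
      ≤ (∑ n ∈ Icc 1 N, (t n - t (n - 1)) / t n) *
          ∑ n ∈ Icc 1 N, t n / (t n - t (n - 1)) * a n ^ 2 :=
        sq_sum_le_sum_div_mul_sum_div_mul_sq _ hpos hstep a
    _ ≤ _ := mul_le_mul_of_nonneg_right hweights (sum_nonneg fun n hn =>
        mul_nonneg (div_pos (hpos n hn) (hstep n hn)).le (sq_nonneg _))

/-- Combined estimate: `∑ aₙ ≤ (1 + log(t_N/k₁))^{1/2} (∑ (tₙ/kₙ) aₙ²)^{1/2}`. -/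
theorem sum_le_log_weighted (N : ℕ) (hN : 1 ≤ N) (t : ℕ → ℝ) (ht0 : t 0 = 0)
    (hmono : ∀ n, n < N → t n < t (n + 1)) (a : ℕ → ℝ)
    (ha : ∀ n ∈ Finset.Icc 1 N, 0 ≤ a n) :
    ∑ n ∈ Finset.Icc 1 N, a n ≤
      (1 + Real.log (t N / (t 1 - t 0))) ^ ((1 : ℝ) / 2) *
        (∑ n ∈ Finset.Icc 1 N, t n / (t n - t (n - 1)) * a n ^ 2) ^ ((1 : ℝ) / 2) :=
  sum_le_log_weighted_general N hN t ht0 hmono a
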